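/- arXiv:2503.18168 — 9 statements merged into one kernel-verified Lean document; each statement's English description precedes it below -/
import Mathlib

section
/- Let U > 0, ε ∈ (0,1), and define π(n) = (1 − ε^n)·U − n·p for n ∈ ℕ. (i) If 0 < p ≤ (1 − ε)·U, then n* = ⌊log_ε( ε·p / ((1−ε)·U) )⌋ (where log_ε x = ln x / ln ε and ⌊·⌋ is the floor function) satisfies n* ≥ 1 and π(n*) ≥ π(n) for all n ∈ ℕ. (ii) If p > (1 − ε)·U, then π(0) ≥ π(n) for all n ∈ ℕ, i.e., n* = 0 is optimal. -/
/-! The marginal payoff `π (k + 1) - π k = εᵏ (1 - ε) U - p` is strictly decreasing in `k`,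
so `π` increases up to the first `k` with `εᵏ (1 - ε) U < p` and decreases from there on.
That `k` is `0` when `p > (1 - ε) U`; otherwise it is the number of `k` with
`ε p / ((1 - ε) U) ≤ εᵏ⁺¹`, which is `⌊log_ε (ε p / ((1 - ε) U))⌋`. -/

open Set

theorem Nat.apply_le_of_le_succ_iff_lt {α : Type*} [LinearOrder α] {f : ℕ → α} {N : ℕ}
    (h : ∀ k, f k ≤ f (k + 1) ↔ k < N) (n : ℕ) : f n ≤ f N := by
  rcases le_total n N with hnN | hNn
  · exact monotoneOn_of_le_add_one ordConnected_Iic (fun k _ _ hk ↦ (h k).2 (mem_Iic.1 hk))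
      (mem_Iic.2 hnN) self_mem_Iic hnN
  · exact antitoneOn_of_add_one_le ordConnected_Ici
      (fun k _ hk _ ↦ le_of_not_ge fun hle ↦ (mem_Ici.1 hk).not_gt ((h k).1 hle))
      self_mem_Ici (mem_Ici.2 hNn) hNn

theorem Real.lt_floor_logb_iff_le_pow_of_base_lt_one {b y : ℝ} (hb₀ : 0 < b) (hb₁ : b < 1)
    (hy : 0 < y) (k : ℕ) : k < ⌊logb b y⌋₊ ↔ y ≤ b ^ (k + 1) := by
  rw [Nat.lt_iff_add_one_le, Nat.le_floor_iff' k.succ_ne_zero,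
    le_logb_iff_rpow_le_of_base_lt_one hb₀ hb₁ hy, ← rpow_natCast, Nat.cast_succ]

def promptPayoff (U p ε : ℝ) (n : ℕ) : ℝ := (1 - ε ^ n) * U - n * p

theorem promptPayoff_le_succ_iff (U p ε : ℝ) (k : ℕ) :
    promptPayoff U p ε k ≤ promptPayoff U p ε (k + 1) ↔ p ≤ ε ^ k * ((1 - ε) * U) := by
  have hdiff :
      promptPayoff U p ε (k + 1) - promptPayoff U p ε k = ε ^ k * ((1 - ε) * U) - p := by
    simp only [promptPayoff]
    push_cast
    ring
  rw [← sub_nonneg, hdiff, sub_nonneg]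

theorem le_pow_mul_iff_lt_floor_logb {U p ε : ℝ} (hU : 0 < U) (hp : 0 < p) (hε₀ : 0 < ε)
    (hε₁ : ε < 1) (k : ℕ) :
    p ≤ ε ^ k * ((1 - ε) * U) ↔ k < ⌊Real.logb ε (ε * p / ((1 - ε) * U))⌋₊ := by
  have hc : 0 < (1 - ε) * U := mul_pos (sub_pos.2 hε₁) hU
  rw [Real.lt_floor_logb_iff_le_pow_of_base_lt_one hε₀ hε₁ (by positivity), div_le_iff₀ hc,
    pow_succ', mul_assoc, mul_le_mul_iff_right₀ hε₀]

/-- Theorem 1 of the paper: with payoff `π n = (1 - ε^n)·U - n·p`,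
(i) if `0 < p ≤ (1-ε)·U` then `n* = ⌊log_ε(ε p /((1-ε)U))⌋` satisfies `n* ≥ 1`
and maximizes `π` over `ℕ`; (ii) if `p > (1-ε)·U` then `n* = 0` maximizes `π`. -/
theorem optimal_prompt_number
    (U p ε : ℝ) (hU : 0 < U) (hε : ε ∈ Set.Ioo (0 : ℝ) 1)
    (π : ℕ → ℝ) (hπ : ∀ n : ℕ, π n = (1 - ε ^ n) * U - n * p) :
    (0 < p → p ≤ (1 - ε) * U →
      1 ≤ ⌊Real.logb ε (ε * p / ((1 - ε) * U))⌋₊ ∧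
      ∀ n : ℕ, π n ≤ π ⌊Real.logb ε (ε * p / ((1 - ε) * U))⌋₊) ∧
    ((1 - ε) * U < p → ∀ n : ℕ, π n ≤ π 0) := by
  obtain ⟨hε₀, hε₁⟩ := hε
  obtain rfl : π = promptPayoff U p ε := funext hπ
  have hmax : ∀ N : ℕ, (∀ k, p ≤ ε ^ k * ((1 - ε) * U) ↔ k < N) →
      ∀ n, promptPayoff U p ε n ≤ promptPayoff U p ε N := fun N hN ↦
    Nat.apply_le_of_le_succ_iff_lt fun k ↦ (promptPayoff_le_succ_iff U p ε k).trans (hN k)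
  refine ⟨fun hp hpU ↦ ?_, fun hp ↦ hmax 0 fun k ↦ ?_⟩
  · have hN := le_pow_mul_iff_lt_floor_logb hU hp hε₀ hε₁
    exact ⟨(hN 0).1 (by simpa using hpU), hmax _ hN⟩
  · have hle : ε ^ k * ((1 - ε) * U) ≤ (1 - ε) * U :=
      mul_le_of_le_one_left (mul_pos (sub_pos.2 hε₁) hU).le (pow_le_one₀ hε₀.le hε₁.le)
    simp only [Nat.not_lt_zero, iff_false, not_le]
    linarith
end

section
/- Let U > 0, p > 0 and ε ∈ (0,1), and define π(n) = (1 − ε^n)·U − n·p for n ∈ ℕ. Then sup_{n ∈ ℕ} π(n) > 0 if and only if p < (1 − ε)·U; moreover sup_{n ∈ ℕ} π(n) ≥ 0 always holds, and when p = (1 − ε)·U the supremum equals 0 and is attained at both n = 0 and n = 1. -/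
/-!
Bernoulli's inequality `1 - ε ^ n ≤ n (1 - ε)` gives `π n ≤ n ((1 - ε) U - p)`: every further prompt
gains at most what the first one does. So if the price is at least the ceiling `(1 - ε) U`, no `n` beats
`π 0 = 0`, while below the ceiling already `π 1 = (1 - ε) U - p` is positive.
-/

theorem one_sub_pow_le_nat_mul_one_sub {R : Type*} [CommRing R] [LinearOrder R] [IsStrictOrderedRing R]
    {ε : R} (hε : -1 ≤ ε) (n : ℕ) : 1 - ε ^ n ≤ n * (1 - ε) := by
  have h := one_add_mul_le_pow (a := ε - 1) (by linarith) n
  rw [add_sub_cancel] at h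
  linarith

def payoff (U p ε : ℝ) (n : ℕ) : ℝ := (1 - ε ^ n) * U - n * p

section

variable {U p ε : ℝ}

@[simp]
theorem payoff_zero : payoff U p ε 0 = 0 := by simp [payoff]

@[simp]
theorem payoff_one : payoff U p ε 1 = (1 - ε) * U - p := by simp [payoff]

theorem payoff_le_nat_mul (hU : 0 ≤ U) (hε : -1 ≤ ε) (n : ℕ) :
    payoff U p ε n ≤ n * ((1 - ε) * U - p) := by
  have := mul_le_mul_of_nonneg_right (one_sub_pow_le_nat_mul_one_sub hε n) hU
  simp only [payoff]
  linarith

theorem payoff_nonpos_of_le_price (hU : 0 ≤ U) (hε : -1 ≤ ε) (hceil : (1 - ε) * U ≤ p) (n : ℕ) :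
    payoff U p ε n ≤ 0 :=
  (payoff_le_nat_mul hU hε n).trans (mul_nonpos_of_nonneg_of_nonpos n.cast_nonneg (by linarith))

theorem payoff_le_utility (hU : 0 ≤ U) (hp : 0 ≤ p) (hε : 0 ≤ ε) (n : ℕ) : payoff U p ε n ≤ U := by
  have : 0 ≤ ε ^ n * U := by positivity
  have : 0 ≤ n * p := by positivity
  simp only [payoff]
  linarith

theorem payoff_bddAbove_range (hU : 0 ≤ U) (hp : 0 ≤ p) (hε : 0 ≤ ε) :
    BddAbove (Set.range (payoff U p ε)) :=
  ⟨U, Set.forall_mem_range.2 (payoff_le_utility hU hp hε)⟩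

end

/-- with payoff `π n = (1 - ε^n)·U - n·p` (`U > 0`, `p > 0`,
`ε ∈ (0,1)`): `sup_n π n > 0 ↔ p < (1-ε)·U`; moreover `sup_n π n ≥ 0` always,
and when `p = (1-ε)·U` the supremum equals `0` and is attained at `n = 0` and
`n = 1`. -/
theorem positive_sup_payoff_iff_price_below_ceiling
    (U p ε : ℝ) (hU : 0 < U) (hp : 0 < p) (hε : ε ∈ Set.Ioo (0 : ℝ) 1)
    (π : ℕ → ℝ) (hπ : ∀ n : ℕ, π n = (1 - ε ^ n) * U - n * p) :
    ((0 < ⨆ n : ℕ, π n) ↔ p < (1 - ε) * U) ∧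
    (0 ≤ ⨆ n : ℕ, π n) ∧
    (p = (1 - ε) * U → (⨆ n : ℕ, π n) = 0 ∧ π 0 = 0 ∧ π 1 = 0) := by
  obtain rfl : π = payoff U p ε := funext hπ
  have hε' : -1 ≤ ε := by linarith [hε.1]
  have hbdd := payoff_bddAbove_range hU.le hp.le hε.1.le
  have hsup_nonneg : 0 ≤ ⨆ n, payoff U p ε n := le_ciSup_of_le hbdd 0 payoff_zero.ge
  refine ⟨⟨fun hpos => ?_, fun hlt => ?_⟩, hsup_nonneg, fun hceil => ?_⟩
  · by_contra! hceil
    exact hpos.not_ge (ciSup_le (payoff_nonpos_of_le_price hU.le hε' hceil))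
  · exact lt_of_lt_of_le (by simpa using hlt) (le_ciSup hbdd 1)
  · have hsup := ciSup_le (payoff_nonpos_of_le_price hU.le hε' hceil.ge)
    exact ⟨hsup.antisymm hsup_nonneg, payoff_zero, by simp [hceil]⟩
end

section
/- Let U > 0 and p > 0, and define n̄ = min{k ∈ ℕ, k ≥ 1 : k^k/(k+1)^{k+1} < p/U}. Then for every prompt ambiguity ε ∈ (0,1), every n ∈ ℕ that maximizes the payoff π(n) = (1 − ε^n)·U − n·p over ℕ satisfies n ≤ n̄. In particular, the optimal prompt number n*(p, ε) (equal to ⌊log_ε(ε·p/((1−ε)·U))⌋ when p ≤ (1−ε)·U and 0 otherwise) satisfies n*(p, ε) ≤ n̄ for all ε ∈ (0,1). -/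
/-- AM–GM bound: for `ε ∈ (0,1)` and `k ≥ 1`, `ε^k (1-ε) ≤ k^k/(k+1)^(k+1)`. -/
lemma pow_mul_one_sub_le (k : ℕ) (hk : 1 ≤ k) {ε : ℝ} (hε0 : 0 < ε) (hε1 : ε < 1) :
    ε ^ k * (1 - ε) ≤ (k : ℝ) ^ k / ((k : ℝ) + 1) ^ (k + 1) := by
  have hkpos : (0 : ℝ) < (k : ℝ) := by exact_mod_cast hk
  have hk1pos : (0 : ℝ) < (k : ℝ) + 1 := by positivity
  set p₁ : ℝ := ((k : ℝ) + 1) * ε / k with hp₁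
  set p₂ : ℝ := ((k : ℝ) + 1) * (1 - ε) with hp₂
  have hp₁0 : 0 ≤ p₁ := by positivity
  have hp₂0 : 0 ≤ p₂ := by
    have : 0 ≤ 1 - ε := by linarith
    positivity
  have hw : (k : ℝ) / ((k : ℝ) + 1) + 1 / ((k : ℝ) + 1) = 1 := by
    field_simp
  have hgm := Real.geom_mean_le_arith_mean2_weighted
    (by positivity : (0:ℝ) ≤ (k : ℝ) / ((k : ℝ) + 1))
    (by positivity : (0:ℝ) ≤ 1 / ((k : ℝ) + 1)) hp₁0 hp₂0 hw
  have harith : (k : ℝ) / ((k : ℝ) + 1) * p₁ + 1 / ((k : ℝ) + 1) * p₂ = 1 := by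
    rw [hp₁, hp₂]; field_simp; ring
  rw [harith] at hgm
  -- raise to the (k+1)-th power
  have hbase0 : 0 ≤ p₁ ^ ((k : ℝ) / ((k : ℝ) + 1)) * p₂ ^ (1 / ((k : ℝ) + 1)) := by
    positivity
  have hpow : (p₁ ^ ((k : ℝ) / ((k : ℝ) + 1)) * p₂ ^ (1 / ((k : ℝ) + 1)))
      ^ ((k : ℝ) + 1) ≤ 1 := by
    calc (p₁ ^ ((k : ℝ) / ((k : ℝ) + 1)) * p₂ ^ (1 / ((k : ℝ) + 1))) ^ ((k : ℝ) + 1)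
        ≤ 1 ^ ((k : ℝ) + 1) := Real.rpow_le_rpow hbase0 hgm (le_of_lt hk1pos)
      _ = 1 := Real.one_rpow _
  have hexpand : (p₁ ^ ((k : ℝ) / ((k : ℝ) + 1)) * p₂ ^ (1 / ((k : ℝ) + 1)))
      ^ ((k : ℝ) + 1) = p₁ ^ (k : ℕ) * p₂ := by
    rw [Real.mul_rpow (Real.rpow_nonneg hp₁0 _) (Real.rpow_nonneg hp₂0 _),
      ← Real.rpow_natCast p₁ k, ← Real.rpow_mul hp₁0, ← Real.rpow_mul hp₂0]
    have e1 : (k : ℝ) / ((k : ℝ) + 1) * ((k : ℝ) + 1) = (k : ℝ) := by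
      field_simp
    have e2 : 1 / ((k : ℝ) + 1) * ((k : ℝ) + 1) = 1 := by
      field_simp
    rw [e1, e2, Real.rpow_one]
  rw [hexpand] at hpow
  have hkne : (k : ℝ) ≠ 0 := ne_of_gt hkpos
  have hval : p₁ ^ (k : ℕ) * p₂
      = ((k : ℝ) + 1) ^ (k + 1) * (ε ^ k * (1 - ε)) / (k : ℝ) ^ k := by
    rw [hp₁, hp₂, div_pow, mul_pow, pow_succ]
    field_simp
  rw [hval, div_le_one (by positivity : (0:ℝ) < (k:ℝ) ^ k)] at hpow
  rw [le_div_iff₀ (by positivity : (0:ℝ) < ((k:ℝ) + 1) ^ (k + 1))]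
  linarith [hpow]

/-- Lemma 2 of the paper: with
`n̄ = min {k ≥ 1 : k^k/(k+1)^(k+1) < p/U}`, every maximizer of the payoff
`π n = (1 - ε^n)·U - n·p` over `ℕ` is at most `n̄`, for every ambiguity
`ε ∈ (0,1)`; in particular the optimal prompt number
`n*(p,ε) = ⌊log_ε(ε p /((1-ε)U))⌋` (and `0` when `p > (1-ε)U`) is at most `n̄`. -/
theorem upper_bound_on_optimal_prompt_number
    (U p : ℝ) (hU : 0 < U) (hp : 0 < p) (nbar : ℕ)
    (hnbar : IsLeast
      {k : ℕ | 1 ≤ k ∧ (k : ℝ) ^ k / ((k : ℝ) + 1) ^ (k + 1) < p / U} nbar) :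
    ∀ ε ∈ Set.Ioo (0 : ℝ) 1,
      (∀ n : ℕ,
        (∀ m : ℕ, (1 - ε ^ m) * U - m * p ≤ (1 - ε ^ n) * U - n * p) →
          n ≤ nbar) ∧
      (if p ≤ (1 - ε) * U then ⌊Real.logb ε (ε * p / ((1 - ε) * U))⌋₊ else 0)
        ≤ nbar := by
  rintro ε ⟨hε0, hε1⟩
  obtain ⟨⟨hnb1, hnblt⟩, _⟩ := hnbar
  -- core strict inequality: ε^nbar * (1-ε) < p/U
  have hcore : ε ^ nbar * (1 - ε) < p / U :=
    lt_of_le_of_lt (pow_mul_one_sub_le nbar hnb1 hε0 hε1) hnblt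
  constructor
  · intro n hmax
    by_contra hlt
    push_neg at hlt
    -- n ≥ nbar + 1 ≥ 2, compare with m = n - 1
    have hn1 : nbar + 1 ≤ n := hlt
    obtain ⟨m, rfl⟩ : ∃ m, n = m + 1 := ⟨n - 1, by omega⟩
    have hm : nbar ≤ m := by omega
    have h := hmax m
    -- π(m) ≤ π(m+1) gives ε^m (1-ε) U ≥ p
    push_cast at h
    have hstep : p ≤ ε ^ m * (1 - ε) * U := by
      have : ε ^ (m + 1) = ε ^ m * ε := pow_succ ε m
      nlinarith [h]
    -- monotonicity: ε^m ≤ ε^nbar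
    have hmono : ε ^ m ≤ ε ^ nbar :=
      pow_le_pow_of_le_one (le_of_lt hε0) (le_of_lt hε1) hm
    have h1ε : 0 ≤ 1 - ε := by linarith
    have : ε ^ m * (1 - ε) ≤ ε ^ nbar * (1 - ε) :=
      mul_le_mul_of_nonneg_right hmono h1ε
    rw [lt_div_iff₀ hU] at hcore
    nlinarith
  · split_ifs with hple
    · -- p ≤ (1-ε) U
      have h1ε : 0 < 1 - ε := by
        rcases lt_or_ge 0 (1 - ε) with h | h
        · exact h
        · exfalso; nlinarith
      set x : ℝ := ε * p / ((1 - ε) * U) with hx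
      have hx0 : 0 < x := by positivity
      -- suffices logb ε x < nbar + 1
      have key : Real.logb ε x < (nbar : ℝ) + 1 := by
        rw [Real.logb_lt_iff_lt_rpow_of_base_lt_one hε0 hε1 hx0]
        have : ε ^ ((nbar : ℝ) + 1) = ε ^ (nbar + 1 : ℕ) := by
          rw [← Real.rpow_natCast ε (nbar + 1)]
          norm_num
        rw [this]
        -- ε^(nbar+1) < ε p /((1-ε)U)  ⟺  ε^nbar (1-ε) < p/U
        rw [lt_div_iff₀ (by positivity)]
        have hcoreU : ε ^ nbar * (1 - ε) * U < p := by
          rw [lt_div_iff₀ hU] at hcore; exact hcore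
        calc ε ^ (nbar + 1) * ((1 - ε) * U) = ε * (ε ^ nbar * (1 - ε) * U) := by
              rw [pow_succ]; ring
          _ < ε * p := by
              exact (mul_lt_mul_iff_right₀ hε0).mpr hcoreU
      have : (⌊Real.logb ε x⌋₊ : ℕ) < nbar + 1 := by
        by_cases hnn : 0 ≤ Real.logb ε x
        · rw [Nat.floor_lt hnn]
          exact_mod_cast key
        · push_neg at hnn
          rw [Nat.floor_of_nonpos (le_of_lt hnn)]
          omega
      omega
    · exact Nat.zero_le _
end

section
/- Let U > 0 and p ∈ (0, U/4]. Define N(ε) = ⌊log_ε( ε·p / ((1−ε)·U) )⌋ for ε ∈ (0,1) with p ≤ (1 − ε)·U, and N(ε) = 0 for ε ∈ (0,1) with p > (1 − ε)·U. Then N is unimodal in ε: there exists ε₀ ∈ (0,1) such that N is nondecreasing on (0, ε₀] and nonincreasing on [ε₀, 1). -/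
open Real Set

noncomputable def phiAux (c : ℝ) : ℝ → ℝ :=
  fun x => x * Real.log x + (1 - x) * Real.log (1 - x) - (1 - x) * Real.log c

noncomputable def HAux (c : ℝ) : ℝ → ℝ :=
  fun x => (Real.log x + Real.log c - Real.log (1 - x)) / Real.log x

lemma phiAux_hasDerivAt (c x : ℝ) (hx0 : 0 < x) (hx1 : x < 1) :
    HasDerivAt (phiAux c) (Real.log x - Real.log (1 - x) + Real.log c) x := by
  have h1x : (0:ℝ) < 1 - x := by linarith
  have h1 : HasDerivAt (fun x : ℝ => x * Real.log x) (Real.log x + 1) x := by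
    have := (hasDerivAt_id x).mul (Real.hasDerivAt_log hx0.ne')
    refine this.congr_deriv ?_
    simp only [id]
    field_simp
  have h2 : HasDerivAt (fun x : ℝ => Real.log (1 - x)) (-(1 - x)⁻¹) x := by
    have hc : HasDerivAt (fun x : ℝ => 1 - x) (-1) x := (hasDerivAt_id x).const_sub 1
    have := (Real.hasDerivAt_log h1x.ne').comp x hc
    refine this.congr_deriv ?_
    ring
  have h3 : HasDerivAt (fun x : ℝ => (1 - x) * Real.log (1 - x))
      (-Real.log (1 - x) - 1) x := by
    have := ((hasDerivAt_id x).const_sub 1).mul h2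
    refine this.congr_deriv ?_
    simp only [id]
    field_simp
    ring
  have h4 : HasDerivAt (fun x : ℝ => (1 - x) * Real.log c) (-Real.log c) x := by
    have := ((hasDerivAt_id x).const_sub 1).mul_const (Real.log c)
    refine this.congr_deriv ?_
    ring
  have := (h1.add h3).sub h4
  refine this.congr_deriv ?_
  ring

lemma phiAux_contOn (c : ℝ) : ContinuousOn (phiAux c) (Ioo (0:ℝ) 1) := by
  have h1 : ContinuousOn (fun x : ℝ => Real.log x) (Ioo (0:ℝ) 1) :=
    Real.continuousOn_log.mono (fun x hx => ne_of_gt hx.1)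
  have h2 : ContinuousOn (fun x : ℝ => Real.log (1 - x)) (Ioo (0:ℝ) 1) :=
    ContinuousOn.log (continuousOn_const.sub continuousOn_id)
      (fun x hx => sub_ne_zero_of_ne (ne_of_gt hx.2))
  exact ((continuousOn_id.mul h1).add ((continuousOn_const.sub continuousOn_id).mul h2)).sub
    ((continuousOn_const.sub continuousOn_id).mul continuousOn_const)

lemma HAux_contOn (c : ℝ) : ContinuousOn (HAux c) (Ioo (0:ℝ) 1) := by
  have h1 : ContinuousOn (fun x : ℝ => Real.log x) (Ioo (0:ℝ) 1) :=
    Real.continuousOn_log.mono (fun x hx => ne_of_gt hx.1)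
  have h2 : ContinuousOn (fun x : ℝ => Real.log (1 - x)) (Ioo (0:ℝ) 1) :=
    ContinuousOn.log (continuousOn_const.sub continuousOn_id)
      (fun x hx => sub_ne_zero_of_ne (ne_of_gt hx.2))
  exact ((h1.add continuousOn_const).sub h2).div h1
    (fun x hx => ne_of_lt (Real.log_neg hx.1 hx.2))

lemma HAux_hasDerivAt (c x : ℝ) (hx0 : 0 < x) (hx1 : x < 1) :
    HasDerivAt (HAux c) (phiAux c x / (x * (1 - x) * (Real.log x)^2)) x := by
  have h1x : (0:ℝ) < 1 - x := by linarith
  have hlx : Real.log x ≠ 0 := ne_of_lt (Real.log_neg hx0 hx1)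
  have hu : HasDerivAt (fun x : ℝ => Real.log x + Real.log c - Real.log (1 - x))
      (x⁻¹ + (1 - x)⁻¹) x := by
    have h2 : HasDerivAt (fun x : ℝ => Real.log (1 - x)) (-(1 - x)⁻¹) x := by
      have hc : HasDerivAt (fun x : ℝ => 1 - x) (-1) x := (hasDerivAt_id x).const_sub 1
      have := (Real.hasDerivAt_log h1x.ne').comp x hc
      refine this.congr_deriv ?_
      ring
    have := ((Real.hasDerivAt_log hx0.ne').add_const (Real.log c)).sub h2
    refine this.congr_deriv ?_
    ring
  have := hu.div (Real.hasDerivAt_log hx0.ne') hlx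
  refine this.congr_deriv ?_
  unfold phiAux
  field_simp
  ring

/-- Proposition 1, low price range: for `U > 0` and
`p ∈ (0, U/4]`, the optimal prompt number
`N ε = ⌊log_ε(ε p /((1-ε)U))⌋` (and `0` when `p > (1-ε)U`) is unimodal in
`ε ∈ (0,1)`: nondecreasing up to some `ε₀` and nonincreasing afterwards. -/
theorem optimal_prompt_number_unimodal_low_price
    (U p : ℝ) (hU : 0 < U) (hp : p ∈ Set.Ioc (0 : ℝ) (U / 4))
    (N : ℝ → ℕ)
    (hN : ∀ ε ∈ Set.Ioo (0 : ℝ) 1,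
      N ε = if p ≤ (1 - ε) * U
        then ⌊Real.logb ε (ε * p / ((1 - ε) * U))⌋₊ else 0) :
    ∃ ε₀ ∈ Set.Ioo (0 : ℝ) 1,
      (∀ ε₁ ∈ Set.Ioo (0 : ℝ) 1, ∀ ε₂ ∈ Set.Ioo (0 : ℝ) 1,
        ε₁ ≤ ε₂ → ε₂ ≤ ε₀ → N ε₁ ≤ N ε₂) ∧
      (∀ ε₁ ∈ Set.Ioo (0 : ℝ) 1, ∀ ε₂ ∈ Set.Ioo (0 : ℝ) 1,
        ε₀ ≤ ε₁ → ε₁ ≤ ε₂ → N ε₂ ≤ N ε₁) := by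
  obtain ⟨hp0, hpU⟩ := hp
  set c : ℝ := p / U with hc_def
  have hc0 : 0 < c := div_pos hp0 hU
  have hc4 : c ≤ 1/4 := by
    rw [hc_def, div_le_div_iff₀ hU (by norm_num : (0:ℝ) < 4)]
    linarith
  have hc1 : c < 1 := by linarith
  have hcc : c < 1 - c := by linarith
  -- φ is strictly antitone on Ioc 0 (1-c)
  have hanti : StrictAntiOn (phiAux c) (Ioc (0:ℝ) (1 - c)) := by
    apply strictAntiOn_of_deriv_neg (convex_Ioc _ _)
    · exact (phiAux_contOn c).mono (fun x hx => ⟨hx.1, by linarith [hx.2]⟩)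
    · intro x hx
      rw [interior_Ioc] at hx
      have hx0 := hx.1
      have hx1c := hx.2
      have hx1 : x < 1 := by linarith
      rw [(phiAux_hasDerivAt c x hx0 hx1).deriv]
      have hxc : x * c < 1 - x := by nlinarith
      have h1x : (0:ℝ) < 1 - x := by linarith
      have := Real.log_lt_log (by positivity : (0:ℝ) < x * c) hxc
      rw [Real.log_mul hx0.ne' hc0.ne'] at this
      linarith
  -- φ c > 0
  have hphic : 0 < phiAux c c := by
    have hlc : Real.log c ≤ Real.log (1/4) := Real.log_le_log hc0 hc4
    have hl4 : Real.log (1/4 : ℝ) = -(2 * Real.log 2) := by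
      rw [show (1/4 : ℝ) = (2:ℝ)^(-2 : ℤ) by norm_num, Real.log_zpow]
      push_cast; ring
    rw [hl4] at hlc
    have hl2 : (0.6931471803 : ℝ) < Real.log 2 := Real.log_two_gt_d9
    have h1c : (0:ℝ) < 1 - c := by linarith
    have hlb : (1 - c) * Real.log (1 - c) ≥ -c := by
      have h := Real.log_le_sub_one_of_pos (show (0:ℝ) < (1-c)⁻¹ by positivity)
      rw [Real.log_inv] at h
      have h2 : Real.log (1 - c) ≥ 1 - (1-c)⁻¹ := by linarith
      have h3 : (1 - c) * (1 - (1-c)⁻¹) = -c := by field_simp; ring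
      nlinarith [mul_le_mul_of_nonneg_left h2 (le_of_lt h1c)]
    have hA : (1:ℝ)/2 ≤ 1 - 2*c := by linarith
    have hB : 2 * Real.log 2 ≤ -Real.log c := by linarith
    have hAB : (1/2 : ℝ) * (2 * Real.log 2) ≤ (1 - 2*c) * (-Real.log c) :=
      mul_le_mul hA hB (by linarith) (by linarith)
    unfold phiAux
    nlinarith
  -- φ (1-c) < 0
  have hphi1c : phiAux c (1 - c) < 0 := by
    unfold phiAux
    have h1c0 : (0:ℝ) < 1 - c := by linarith
    have : Real.log (1 - c) < 0 := Real.log_neg h1c0 (by linarith)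
    have h2 : 1 - (1 - c) = c := by ring
    rw [h2]
    nlinarith
  -- IVT for ε₀
  have hsub : Icc c (1 - c) ⊆ Ioo (0:ℝ) 1 :=
    fun x hx => ⟨lt_of_lt_of_le hc0 hx.1, by have := hx.2; linarith⟩
  have hivt := intermediate_value_Ioo' (le_of_lt hcc) ((phiAux_contOn c).mono hsub)
  have h0mem : (0:ℝ) ∈ Ioo (phiAux c (1 - c)) (phiAux c c) := ⟨hphi1c, hphic⟩
  obtain ⟨ε₀, hε₀mem, hε₀val⟩ := hivt h0mem
  have hε₀c : c < ε₀ := hε₀mem.1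
  have hε₀1c : ε₀ < 1 - c := hε₀mem.2
  have hε₀0 : 0 < ε₀ := lt_trans hc0 hε₀c
  have hε₀1 : ε₀ < 1 := by linarith
  -- H is strictly monotone on Ioc 0 ε₀
  have hmono : StrictMonoOn (HAux c) (Ioc (0:ℝ) ε₀) := by
    apply strictMonoOn_of_deriv_pos (convex_Ioc _ _)
    · exact (HAux_contOn c).mono (fun x hx => ⟨hx.1, lt_of_le_of_lt hx.2 hε₀1⟩)
    · intro x hx
      rw [interior_Ioc] at hx
      have hx0 := hx.1
      have hx1 : x < 1 := by linarith [hx.2]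
      rw [(HAux_hasDerivAt c x hx0 hx1).deriv]
      have hphix : 0 < phiAux c x := by
        have := hanti ⟨hx0, by linarith [hx.2]⟩ ⟨hε₀0, le_of_lt hε₀1c⟩ hx.2
        rw [hε₀val] at this
        exact this
      have hlx : Real.log x ≠ 0 := ne_of_lt (Real.log_neg hx0 hx1)
      have hpos : (0:ℝ) < x * (1 - x) * (Real.log x)^2 :=
        mul_pos (mul_pos hx0 (by linarith)) (sq_pos_of_ne_zero hlx)
      exact div_pos hphix hpos
  -- H is strictly antitone on Icc ε₀ (1-c)
  have hanti2 : StrictAntiOn (HAux c) (Icc ε₀ (1 - c)) := by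
    apply strictAntiOn_of_deriv_neg (convex_Icc _ _)
    · exact (HAux_contOn c).mono (fun x hx => ⟨lt_of_lt_of_le hε₀0 hx.1, by
        have := hx.2; linarith⟩)
    · intro x hx
      rw [interior_Icc] at hx
      have hx0 : 0 < x := lt_trans hε₀0 hx.1
      have hx1 : x < 1 := by linarith [hx.2]
      rw [(HAux_hasDerivAt c x hx0 hx1).deriv]
      have hphix : phiAux c x < 0 := by
        have := hanti ⟨hε₀0, le_of_lt hε₀1c⟩ ⟨hx0, le_of_lt hx.2⟩ hx.1
        rw [hε₀val] at this
        exact this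
      have hlx : Real.log x ≠ 0 := ne_of_lt (Real.log_neg hx0 hx1)
      have hpos : (0:ℝ) < x * (1 - x) * (Real.log x)^2 :=
        mul_pos (mul_pos hx0 (by linarith)) (sq_pos_of_ne_zero hlx)
      exact div_neg_of_neg_of_pos hphix hpos
  -- branch condition and logb identification
  have hbranch : ∀ ε ∈ Ioo (0:ℝ) 1, ε ≤ 1 - c → p ≤ (1 - ε) * U := by
    intro ε _ h
    have : c ≤ 1 - ε := by linarith
    calc p = c * U := by rw [hc_def]; field_simp
    _ ≤ (1 - ε) * U := by nlinarith
  have hbranch' : ∀ ε ∈ Ioo (0:ℝ) 1, p ≤ (1 - ε) * U → ε ≤ 1 - c := by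
    intro ε _ h
    have : c ≤ 1 - ε := by
      rw [hc_def, div_le_iff₀ hU]; linarith
    linarith
  have hlogb : ∀ ε ∈ Ioo (0:ℝ) 1,
      Real.logb ε (ε * p / ((1 - ε) * U)) = HAux c ε := by
    intro ε hε
    have hε0 := hε.1
    have hε1 := hε.2
    have h1ε : (0:ℝ) < 1 - ε := by linarith
    rw [Real.logb]
    unfold HAux
    congr 1
    rw [Real.log_div (by positivity) (by positivity), Real.log_mul hε0.ne' hp0.ne',
      Real.log_mul h1ε.ne' hU.ne', hc_def, Real.log_div hp0.ne' hU.ne']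
    ring
  refine ⟨ε₀, ⟨hε₀0, hε₀1⟩, ?_, ?_⟩
  · -- nondecreasing part
    intro ε₁ hε₁ ε₂ hε₂ h12 h2e
    have h1e : ε₁ ≤ ε₀ := le_trans h12 h2e
    have hb1 : p ≤ (1 - ε₁) * U := hbranch ε₁ hε₁ (by linarith)
    have hb2 : p ≤ (1 - ε₂) * U := hbranch ε₂ hε₂ (by linarith)
    rw [hN ε₁ hε₁, hN ε₂ hε₂, if_pos hb1, if_pos hb2, hlogb ε₁ hε₁, hlogb ε₂ hε₂]
    exact Nat.floor_le_floor
      ((hmono.monotoneOn) ⟨hε₁.1, h1e⟩ ⟨hε₂.1, h2e⟩ h12)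
  · -- nonincreasing part
    intro ε₁ hε₁ ε₂ hε₂ he1 h12
    by_cases hb2 : p ≤ (1 - ε₂) * U
    · have h2c : ε₂ ≤ 1 - c := hbranch' ε₂ hε₂ hb2
      have hb1 : p ≤ (1 - ε₁) * U := hbranch ε₁ hε₁ (by linarith)
      rw [hN ε₁ hε₁, hN ε₂ hε₂, if_pos hb1, if_pos hb2, hlogb ε₁ hε₁, hlogb ε₂ hε₂]
      exact Nat.floor_le_floor
        ((hanti2.antitoneOn) ⟨he1, by linarith⟩ ⟨le_trans he1 h12, h2c⟩ h12)
    · rw [hN ε₂ hε₂, if_neg hb2]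
      exact Nat.zero_le _
end

section
/- Let U > 0. Define N(ε) = ⌊log_ε( ε·p / ((1−ε)·U) )⌋ for ε ∈ (0,1) with p ≤ (1 − ε)·U, and N(ε) = 0 for ε ∈ (0,1) with p > (1 − ε)·U. (i) If p ∈ (U/4, U), then N is nonincreasing on (0,1). (ii) If p ≥ U, then N(ε) = 0 for every ε ∈ (0,1). -/
/-!
For `U / 4 < p ≤ (1 - ε) U` the argument `ε p / ((1 - ε) U)` of the logarithm lies in `(ε², ε]`:
the upper bound is `p ≤ (1 - ε) U`, the lower bound is `ε (1 - ε) ≤ 1 / 4`. Hence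
`N ε = 1` whenever the user participates, and `N ε = 0` otherwise; since participation
`p ≤ (1 - ε) U` is harder for larger `ε`, `N` is nonincreasing. If `p ≥ U > (1 - ε) U`
the user never participates.
-/

open Real

theorem Real.floor_logb_eq_of_base_lt_one {b x : ℝ} {n : ℕ} (hb₀ : 0 < b) (hb₁ : b < 1)
    (hx : 0 < x) (hlo : b ^ (n + 1) < x) (hhi : x ≤ b ^ n) : ⌊logb b x⌋₊ = n := by
  have hn : (n : ℝ) ≤ logb b x := by
    rwa [le_logb_iff_rpow_le_of_base_lt_one hb₀ hb₁ hx, rpow_natCast]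
  rw [Nat.floor_eq_iff (n.cast_nonneg.trans hn)]
  refine ⟨hn, ?_⟩
  rwa [logb_lt_iff_lt_rpow_of_base_lt_one hb₀ hb₁ hx, ← Nat.cast_succ, rpow_natCast]

theorem sq_lt_prompt_ratio {U p ε : ℝ} (hU : 0 < U) (hp : U / 4 < p) (hε₀ : 0 < ε)
    (hε₁ : ε < 1) : ε ^ 2 < ε * p / ((1 - ε) * U) := by
  have hε : ε * (1 - ε) ≤ 1 / 4 := by nlinarith [sq_nonneg (2 * ε - 1)]
  rw [lt_div_iff₀ (by nlinarith)]
  nlinarith [mul_le_mul_of_nonneg_right hε hU.le]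

theorem floor_logb_prompt_ratio_eq_one {U p ε : ℝ} (hU : 0 < U) (hp : U / 4 < p)
    (hε₀ : 0 < ε) (hε₁ : ε < 1) (hpε : p ≤ (1 - ε) * U) :
    ⌊logb ε (ε * p / ((1 - ε) * U))⌋₊ = 1 := by
  have hd : 0 < (1 - ε) * U := mul_pos (sub_pos.2 hε₁) hU
  have hp₀ : 0 < p := (div_pos hU four_pos).trans hp
  refine floor_logb_eq_of_base_lt_one hε₀ hε₁ (by positivity) ?_ ?_
  · simpa using sq_lt_prompt_ratio hU hp hε₀ hε₁
  · simpa using (div_le_iff₀ hd).2 (mul_le_mul_of_nonneg_left hpε hε₀.le)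

/-- Proposition 1, high price and non-participation ranges: for
the optimal prompt number `N ε = ⌊log_ε(ε p /((1-ε)U))⌋` (and `0` when
`p > (1-ε)U`): (i) if `p ∈ (U/4, U)` then `N` is nonincreasing on `(0,1)`;
(ii) if `p ≥ U` then `N ε = 0` for all `ε ∈ (0,1)`. -/
theorem optimal_prompt_number_high_price
    (U p : ℝ) (hU : 0 < U)
    (N : ℝ → ℕ)
    (hN : ∀ ε ∈ Set.Ioo (0 : ℝ) 1,
      N ε = if p ≤ (1 - ε) * U
        then ⌊Real.logb ε (ε * p / ((1 - ε) * U))⌋₊ else 0) :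
    (p ∈ Set.Ioo (U / 4) U →
      ∀ ε₁ ∈ Set.Ioo (0 : ℝ) 1, ∀ ε₂ ∈ Set.Ioo (0 : ℝ) 1,
        ε₁ ≤ ε₂ → N ε₂ ≤ N ε₁) ∧
    (U ≤ p → ∀ ε ∈ Set.Ioo (0 : ℝ) 1, N ε = 0) := by
  constructor
  · rintro ⟨hp, -⟩ ε₁ hε₁ ε₂ hε₂ h12
    rw [hN ε₁ hε₁, hN ε₂ hε₂]
    by_cases h₂ : p ≤ (1 - ε₂) * U
    · have h₁ : p ≤ (1 - ε₁) * U := h₂.trans (by nlinarith)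
      rw [if_pos h₁, if_pos h₂, floor_logb_prompt_ratio_eq_one hU hp hε₁.1 hε₁.2 h₁,
        floor_logb_prompt_ratio_eq_one hU hp hε₂.1 hε₂.2 h₂]
    · rw [if_neg h₂]
      exact Nat.zero_le _
  · rintro hUp ε hε
    have hnot : ¬ p ≤ (1 - ε) * U := by nlinarith [hε.1]
    rw [hN ε hε, if_neg hnot]
end

section
/- Let U > 0, ε ∈ (0,1), and 0 ≤ C < (1 − ε)·U. Define σ = min{k ∈ ℕ, k ≥ 1 : (k+1)·ε^k − k·ε^{k−1} < C/((1 − ε)·U)} (this set is nonempty), and set p* = ε^{σ−1}·(1 − ε)·U. Let n*(p) = ⌊log_ε( ε·p / ((1−ε)·U) )⌋ for 0 < p ≤ (1 − ε)·U and n*(p) = 0 for p > (1 − ε)·U. Then n*(p*) = σ, and for every price p > 0, (p* − C)·n*(p*) ≥ (p − C)·n*(p); that is, p* maximizes the platform's payoff (p − C)·n*(p) over all prompt prices p > 0. -/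
/-- Auxiliary: the defining condition of the set is preserved under successor. -/
private lemma aux_step_mem (ε c : ℝ) (hε0 : 0 < ε) (hε1 : ε < 1) (hc : 0 ≤ c)
    (m : ℕ) (h : ((m : ℝ) + 1 + 1) * ε ^ (m + 1) - ((m : ℝ) + 1) * ε ^ m < c) :
    ((m : ℝ) + 1 + 1 + 1) * ε ^ (m + 1 + 1) - ((m : ℝ) + 1 + 1) * ε ^ (m + 1) < c := by
  have hx : (0 : ℝ) < ε ^ m := pow_pos hε0 m
  have e1 : ε ^ (m + 1) = ε * ε ^ m := by ring
  have e2 : ε ^ (m + 1 + 1) = ε * (ε * ε ^ m) := by ring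
  rw [e1] at h
  rw [e1, e2]
  have key : ((m : ℝ) + 1 + 1 + 1) * (ε * (ε * ε ^ m)) - ((m : ℝ) + 1 + 1) * (ε * ε ^ m)
      < ε * (((m : ℝ) + 1 + 1) * (ε * ε ^ m) - ((m : ℝ) + 1) * ε ^ m) := by
    nlinarith [mul_pos (mul_pos hε0 hx) (show (0 : ℝ) < 1 - ε by linarith)]
  rcases le_or_gt (((m : ℝ) + 1 + 1) * (ε * ε ^ m) - ((m : ℝ) + 1) * ε ^ m) 0 with hA | hA
  · nlinarith
  · nlinarith

private noncomputable def gg (ε U C : ℝ) (n : ℕ) : ℝ :=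
  (n : ℝ) * (ε ^ (n - 1) * ((1 - ε) * U)) - (n : ℝ) * C

private lemma gg_step_lt (ε U C : ℝ) (hD : 0 < (1 - ε) * U) (m : ℕ)
    (h : ((m : ℝ) + 1 + 1) * ε ^ (m + 1) - ((m : ℝ) + 1) * ε ^ m < C / ((1 - ε) * U)) :
    gg ε U C (m + 1 + 1) < gg ε U C (m + 1) := by
  have h' := (lt_div_iff₀ hD).mp h
  unfold gg
  simp only [Nat.add_sub_cancel]
  push_cast
  nlinarith [h']

private lemma gg_step_ge (ε U C : ℝ) (hD : 0 < (1 - ε) * U) (m : ℕ)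
    (h : C / ((1 - ε) * U) ≤ ((m : ℝ) + 1 + 1) * ε ^ (m + 1) - ((m : ℝ) + 1) * ε ^ m) :
    gg ε U C (m + 1) ≤ gg ε U C (m + 1 + 1) := by
  have h' := (div_le_iff₀ hD).mp h
  unfold gg
  simp only [Nat.add_sub_cancel]
  push_cast
  nlinarith [h']

/-- Theorem 2 of the paper, single-model optimal pricing: with
`σ = min {k ≥ 1 : (k+1)·ε^k - k·ε^(k-1) < C/((1-ε)·U)}` (a nonempty set) and
`p* = ε^(σ-1)·(1-ε)·U`, the induced optimal prompt number satisfies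
`n*(p*) = σ`, and `p*` maximizes the platform's payoff `(p - C)·n*(p)` over
all prices `p > 0`. -/
theorem optimal_prompt_price_single_model
    (U C ε : ℝ) (hU : 0 < U) (hε : ε ∈ Set.Ioo (0 : ℝ) 1)
    (hC : 0 ≤ C) (hCU : C < (1 - ε) * U)
    (σ : ℕ)
    (hσ : σ = sInf {k : ℕ | 1 ≤ k ∧
      ((k : ℝ) + 1) * ε ^ k - (k : ℝ) * ε ^ (k - 1) < C / ((1 - ε) * U)})
    (nstar : ℝ → ℕ)
    (hn : ∀ p > (0 : ℝ), nstar p =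
      if p ≤ (1 - ε) * U then ⌊Real.logb ε (ε * p / ((1 - ε) * U))⌋₊ else 0)
    (pstar : ℝ) (hp : pstar = ε ^ (σ - 1) * (1 - ε) * U) :
    {k : ℕ | 1 ≤ k ∧
      ((k : ℝ) + 1) * ε ^ k - (k : ℝ) * ε ^ (k - 1) < C / ((1 - ε) * U)}.Nonempty ∧
    nstar pstar = σ ∧
    ∀ p > (0 : ℝ), (p - C) * (nstar p : ℝ) ≤ (pstar - C) * (nstar pstar : ℝ) := by
  obtain ⟨hε0, hε1⟩ := hε
  have hD : 0 < (1 - ε) * U := lt_of_le_of_lt hC hCU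
  have hc0 : 0 ≤ C / ((1 - ε) * U) := div_nonneg hC hD.le
  set S : Set ℕ := {k : ℕ | 1 ≤ k ∧
      ((k : ℝ) + 1) * ε ^ k - (k : ℝ) * ε ^ (k - 1) < C / ((1 - ε) * U)} with hS
  -- Nonemptiness
  have hne : S.Nonempty := by
    obtain ⟨N, hN⟩ := exists_nat_gt (ε / (1 - ε))
    have h1ε : (0 : ℝ) < 1 - ε := by linarith
    have hεN : ε < N * (1 - ε) := (div_lt_iff₀ h1ε).mp hN
    have hN1 : 1 ≤ N := by
      by_contra hcon
      interval_cases N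
      simp at hεN
      linarith
    obtain ⟨m, rfl⟩ : ∃ m, N = m + 1 := ⟨N - 1, by omega⟩
    refine ⟨m + 1, by omega, ?_⟩
    simp only [Nat.add_sub_cancel]
    push_cast
    push_cast at hεN
    have hx : (0 : ℝ) < ε ^ m := pow_pos hε0 m
    have e1 : ε ^ (m + 1) = ε * ε ^ m := by ring
    rw [e1]
    have hneg : ((m : ℝ) + 1 + 1) * ε - ((m : ℝ) + 1) < 0 := by nlinarith
    nlinarith [mul_pos hx (show (0 : ℝ) < ((m : ℝ) + 1) - ((m : ℝ) + 1 + 1) * ε by linarith)]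
  have hσmem : σ ∈ S := hσ ▸ Nat.sInf_mem hne
  have hσ1 : 1 ≤ σ := hσmem.1
  -- all m ≥ σ are in S
  have hmemall : ∀ m, σ ≤ m → m ∈ S := by
    refine fun m hm => Nat.le_induction hσmem (fun n hn' ih => ?_) m hm
    obtain ⟨j, rfl⟩ : ∃ j, n = j + 1 := ⟨n - 1, by omega⟩
    obtain ⟨-, hf⟩ := ih
    constructor
    · omega
    · simp only [Nat.add_sub_cancel] at hf ⊢
      push_cast at hf ⊢
      exact aux_step_mem ε _ hε0 hε1 hc0 j hf
  -- all 1 ≤ k < σ are not in S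
  have hbelow : ∀ k : ℕ, 1 ≤ k → k < σ →
      C / ((1 - ε) * U) ≤ ((k : ℝ) + 1) * ε ^ k - (k : ℝ) * ε ^ (k - 1) := by
    intro k h1 h2
    have : k ∉ S := by
      rw [hσ] at h2
      exact Nat.notMem_of_lt_sInf h2
    rw [hS] at this
    simp only [Set.mem_setOf_eq, not_and, not_lt] at this
    exact this h1
  -- increasing up to σ
  have hup : ∀ m : ℕ, ∀ n : ℕ, 1 ≤ n → n ≤ m → m ≤ σ → gg ε U C n ≤ gg ε U C m := by
    intro m
    induction m with
    | zero => intro n h1 h2 _; omega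
    | succ m ih =>
      intro n h1 h2 h3
      rcases eq_or_lt_of_le h2 with rfl | hlt
      · exact le_refl _
      · have h2' : n ≤ m := Nat.lt_succ_iff.mp hlt
        have h1m : 1 ≤ m := le_trans h1 h2'
        have hstep : gg ε U C m ≤ gg ε U C (m + 1) := by
          have hge := hbelow m h1m (by omega)
          obtain ⟨j, rfl⟩ : ∃ j, m = j + 1 := ⟨m - 1, by omega⟩
          simp only [Nat.add_sub_cancel] at hge
          push_cast at hge
          exact gg_step_ge ε U C hD j hge
        exact le_trans (ih n h1 h2' (by omega)) hstep
  -- decreasing from σ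
  have hdown : ∀ m : ℕ, σ ≤ m → gg ε U C m ≤ gg ε U C σ := by
    refine fun m hm => Nat.le_induction (le_refl _) (fun n hn' ih => ?_) m hm
    obtain ⟨-, hf⟩ := hmemall n hn'
    obtain ⟨j, rfl⟩ : ∃ j, n = j + 1 := ⟨n - 1, by omega⟩
    simp only [Nat.add_sub_cancel] at hf
    push_cast at hf
    exact le_trans (gg_step_lt ε U C hD j hf).le ih
  have hgmax : ∀ n : ℕ, 1 ≤ n → gg ε U C n ≤ gg ε U C σ := by
    intro n h1
    rcases le_or_gt n σ with h | h
    · exact hup σ n h1 h (le_refl _)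
    · exact hdown n h.le
  have hg1 : gg ε U C 1 = (1 - ε) * U - C := by
    unfold gg; norm_num
  have hgσpos : 0 < gg ε U C σ := by
    have := hgmax 1 (le_refl _)
    rw [hg1] at this
    linarith
  -- pstar facts
  obtain ⟨s, hsσ⟩ : ∃ s, σ = s + 1 := ⟨σ - 1, by omega⟩
  have hps : pstar = ε ^ s * ((1 - ε) * U) := by
    rw [hp, hsσ]; simp only [Nat.add_sub_cancel]; ring
  have hpstar_pos : 0 < pstar := by
    rw [hps]; positivity
  have hpstar_le : pstar ≤ (1 - ε) * U := by
    rw [hps]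
    have h1 : ε ^ s ≤ 1 := pow_le_one₀ hε0.le hε1.le
    nlinarith
  have hq : ε * pstar / ((1 - ε) * U) = ε ^ σ := by
    rw [hps, hsσ]
    field_simp
    ring
  have hlogε : Real.log ε ≠ 0 := by
    have := Real.log_neg hε0 hε1
    linarith
  have hnstar : nstar pstar = σ := by
    rw [hn pstar hpstar_pos, if_pos hpstar_le, hq]
    rw [Real.logb, Real.log_pow]
    rw [mul_div_assoc, div_self hlogε, mul_one]
    exact Nat.floor_natCast σ
  refine ⟨hne, hnstar, ?_⟩
  -- main inequality
  intro p hpos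
  have hRHS : (pstar - C) * ((nstar pstar : ℕ) : ℝ) = gg ε U C σ := by
    rw [hnstar, hps]
    unfold gg
    rw [show σ - 1 = s by omega]
    ring
  rw [hRHS, hn p hpos]
  split_ifs with hple
  · set x := Real.logb ε (ε * p / ((1 - ε) * U)) with hx
    rcases Nat.eq_zero_or_pos ⌊x⌋₊ with h0 | h1
    · rw [h0]; simpa using hgσpos.le
    · have hx0 : 0 ≤ x := by
        by_contra hcon
        push_neg at hcon
        rw [Nat.floor_of_nonpos hcon.le] at h1
        omega
      have hnx : (⌊x⌋₊ : ℝ) ≤ x := Nat.floor_le hx0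
      have ht : 0 < ε * p / ((1 - ε) * U) := by positivity
      have hlogneg : Real.log ε < 0 := Real.log_neg hε0 hε1
      have hlog_le : Real.log (ε * p / ((1 - ε) * U)) ≤ (⌊x⌋₊ : ℝ) * Real.log ε := by
        have := hnx
        rw [hx, Real.logb] at this
        exact (le_div_iff_of_neg hlogneg).mp this
      have hle_pow : ε * p / ((1 - ε) * U) ≤ ε ^ ⌊x⌋₊ := by
        by_contra hcon
        push_neg at hcon
        have := Real.log_lt_log (pow_pos hε0 _) hcon
        rw [Real.log_pow] at this
        linarith
      obtain ⟨m, hm⟩ : ∃ m, ⌊x⌋₊ = m + 1 := ⟨⌊x⌋₊ - 1, by omega⟩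
      have hple2 : p ≤ ε ^ m * ((1 - ε) * U) := by
        rw [hm] at hle_pow
        have h2 : ε * p ≤ ε ^ (m + 1) * ((1 - ε) * U) := (div_le_iff₀ hD).mp hle_pow
        have h3 : ε ^ (m + 1) = ε * ε ^ m := by ring
        rw [h3] at h2
        have := (mul_le_mul_iff_right₀ hε0).mp (by linarith [h2] : ε * p ≤ ε * (ε ^ m * ((1 - ε) * U)))
        exact this
      have hggn : gg ε U C ⌊x⌋₊ = (ε ^ m * ((1 - ε) * U) - C) * ((⌊x⌋₊ : ℕ) : ℝ) := by
        rw [hm]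
        unfold gg
        simp only [Nat.add_sub_cancel]
        push_cast
        ring
      have hchain : (p - C) * ((⌊x⌋₊ : ℕ) : ℝ) ≤ gg ε U C ⌊x⌋₊ := by
        rw [hggn]
        apply mul_le_mul_of_nonneg_right (by linarith) (by positivity)
      exact le_trans hchain (hgmax ⌊x⌋₊ (by omega))
  · simpa using hgσpos.le
end

section
/- Let U > 0 and C ∈ (0, U/8]. For ε ∈ (0,1) define σ(ε) = min{k ∈ ℕ, k ≥ 1 : (k+1)·ε^k − k·ε^{k−1} < C/((1 − ε)·U)} when C < (1 − ε)·U, and σ(ε) = 0 when C ≥ (1 − ε)·U. Then σ is unimodal on (0,1): there exists ε₀ ∈ (0,1) such that σ is nondecreasing on (0, ε₀] and nonincreasing on [ε₀, 1). -/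
/-!
Write `R_k(ε) = k ε^(k-1) (1 - ε) U` for the revenue of the price that induces `k` prompts; the
inequality defining `σ ε` says that the marginal revenue `R_(k+1)(ε) - R_k(ε)` is below the cost `C`.
The marginal revenue `(1 - ε) U ε^(k-1) ((k+1) ε - k)` is a product of affine factors, positive
exactly on `(k/(k+1), 1)`, and log-concave there; hence its superlevel sets at positive levels are
intervals. So for `x ≤ y ≤ z`, `k = σ y < min (σ x) (σ z)` is impossible: the marginal revenue at
`k` would be `≥ C` at `x` and `z` but `< C` at `y`. Thus `σ` is quasiconcave; it is also bounded,
since the marginal revenue at `k` stays below `U / (k + 1)`, and a bounded `ℕ`-valued quasiconcave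
function rises up to a point of maximum and falls after it.
-/

open Set Real

lemma concaveOn_log_affine (a b : ℝ) :
    ConcaveOn ℝ {t | 0 < a * t + b} fun t ↦ log (a * t + b) := by
  let ℓ : ℝ →ᵃ[ℝ] ℝ := a • AffineMap.id ℝ ℝ + AffineMap.const ℝ ℝ b
  exact strictConcaveOn_log_Ioi.concaveOn.comp_affineMap ℓ

lemma QuasiconcaveOn.exists_monotoneOn_antitoneOn {𝕜 : Type*} [Field 𝕜] [LinearOrder 𝕜]
    [IsStrictOrderedRing 𝕜] {s : Set 𝕜} {f : 𝕜 → ℕ} (hf : QuasiconcaveOn 𝕜 s f)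
    (hs : s.Nonempty) (hbdd : BddAbove (f '' s)) :
    ∃ x₀ ∈ s, MonotoneOn f (s ∩ Iic x₀) ∧ AntitoneOn f (s ∩ Ici x₀) := by
  obtain ⟨x₀, hx₀, hfx₀⟩ := Nat.sSup_mem (hs.image f) hbdd
  have hmax {x : 𝕜} (hx : x ∈ s) : f x ≤ f x₀ := hfx₀ ▸ le_csSup hbdd (mem_image_of_mem f hx)
  have hsuper (r : ℕ) := convex_iff_ordConnected.1 (hf r)
  refine ⟨x₀, hx₀, fun a ⟨ha, _⟩ b ⟨hb, hbx₀⟩ hab ↦ ?_, fun a ⟨ha, hx₀a⟩ b ⟨hb, _⟩ hab ↦ ?_⟩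
  · exact ((hsuper (f a)).out ⟨ha, le_rfl⟩ ⟨hx₀, hmax ha⟩ ⟨hab, hbx₀⟩).2
  · exact ((hsuper (f b)).out ⟨hx₀, hmax hb⟩ ⟨hb, le_rfl⟩ ⟨hx₀a, hab⟩).2

noncomputable def marginalRevenue (U : ℝ) (k : ℕ) (ε : ℝ) : ℝ :=
  (1 - ε) * U * ((k + 1) * ε ^ k - k * ε ^ (k - 1))

lemma marginalRevenue_succ (U : ℝ) (m : ℕ) (ε : ℝ) :
    marginalRevenue U (m + 1) ε = (1 - ε) * U * (ε ^ m * ((m + 2) * ε - (m + 1))) := by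
  simp only [marginalRevenue, Nat.add_sub_cancel]
  push_cast
  ring

lemma marginalRevenue_succ_pos_iff {U : ℝ} (hU : 0 < U) (m : ℕ) {ε : ℝ} (hε : 0 < ε) :
    0 < marginalRevenue U (m + 1) ε ↔ ε ∈ Ioo (((m : ℝ) + 1) / (m + 2)) 1 := by
  have hm : (0 : ℝ) < m + 2 := by positivity
  have hεm : 0 < U * ε ^ m := by positivity
  rw [mem_Ioo, div_lt_iff₀ hm, marginalRevenue_succ,
    show ∀ a : ℝ, (1 - ε) * U * (ε ^ m * a) = U * ε ^ m * ((1 - ε) * a) by intro; ring,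
    mul_pos_iff_of_pos_left hεm]
  constructor
  · intro h
    rcases mul_pos_iff.1 h with ⟨h₁, h₂⟩ | ⟨h₁, h₂⟩
    · constructor <;> linarith
    · nlinarith
  · rintro ⟨h₁, h₂⟩
    exact mul_pos (by linarith) (by linarith)

lemma concaveOn_log_marginalRevenue_succ {U : ℝ} (hU : 0 < U) (m : ℕ) :
    ConcaveOn ℝ (Ioo (((m : ℝ) + 1) / (m + 2)) 1) fun t ↦ log (marginalRevenue U (m + 1) t) := by
  set s := Ioo (((m : ℝ) + 1) / (m + 2)) 1
  have hs : ∀ t ∈ s, 0 < t ∧ 0 < 1 - t ∧ 0 < (m + 2) * t - (m + 1) := by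
    rintro t ⟨h₁, h₂⟩
    rw [div_lt_iff₀ (by positivity)] at h₁
    refine ⟨by nlinarith, by linarith, by linarith⟩
  have hlog_sub : ConcaveOn ℝ s fun t ↦ log (-1 * t + 1) :=
    (concaveOn_log_affine _ _).subset (fun t ht ↦ show (0 : ℝ) < _ by linarith [hs t ht])
      (convex_Ioo _ _)
  have hlog : ConcaveOn ℝ s fun t ↦ (m : ℝ) • log (1 * t + 0) :=
    ((concaveOn_log_affine _ _).subset (fun t ht ↦ show (0 : ℝ) < _ by linarith [hs t ht])
      (convex_Ioo _ _)).smul m.cast_nonneg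
  have hlog_lin : ConcaveOn ℝ s fun t ↦ log ((m + 2) * t + -(m + 1)) :=
    (concaveOn_log_affine _ _).subset (fun t ht ↦ show (0 : ℝ) < _ by linarith [hs t ht])
      (convex_Ioo _ _)
  refine (((hlog_sub.add (concaveOn_const (log U) (convex_Ioo _ _))).add hlog).add
    hlog_lin).congr fun t ht ↦ ?_
  obtain ⟨ht₀, ht₁, ht₂⟩ := hs t ht
  simp only [Pi.add_apply, smul_eq_mul, marginalRevenue_succ, neg_one_mul, one_mul, add_zero,
    neg_add_eq_sub, ← sub_eq_add_neg]
  rw [log_mul (by positivity) (by positivity), log_mul (by positivity) (by positivity),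
    log_mul (by positivity) (by positivity), log_pow]
  ring

lemma ordConnected_inter_setOf_le_marginalRevenue {U c : ℝ} (hU : 0 < U) (hc : 0 < c) {k : ℕ}
    (hk : k ≠ 0) : (Ioi 0 ∩ {t | c ≤ marginalRevenue U k t}).OrdConnected := by
  obtain ⟨m, rfl⟩ := Nat.exists_eq_add_one_of_ne_zero hk
  have hmem {t : ℝ} (ht : 0 < t) (hct : c ≤ marginalRevenue U (m + 1) t) :
      t ∈ {t ∈ Ioo (((m : ℝ) + 1) / (m + 2)) 1 | log c ≤ log (marginalRevenue U (m + 1) t)} :=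
    ⟨(marginalRevenue_succ_pos_iff hU m ht).1 (hc.trans_le hct), log_le_log hc hct⟩
  refine ⟨fun x ⟨hx, hcx⟩ z ⟨hz, hcz⟩ y ⟨hxy, hyz⟩ ↦ ?_⟩
  have hy := ((concaveOn_log_marginalRevenue_succ hU m).convex_ge (log c)).ordConnected.out
    (hmem hx hcx) (hmem hz hcz) ⟨hxy, hyz⟩
  have hy₀ : (0 : ℝ) < y := (mem_Ioi.1 hx).trans_le hxy
  exact ⟨hy₀, (log_le_log_iff hc ((marginalRevenue_succ_pos_iff hU m hy₀).2 hy.1)).1 hy.2⟩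

lemma marginalRevenue_succ_lt {U C : ℝ} (hU : 0 < U) {m : ℕ} (hm : U ≤ C * (m + 2)) {ε : ℝ}
    (hε : ε ∈ Ioo 0 1) : marginalRevenue U (m + 1) ε < C := by
  have hm₀ : (0 : ℝ) < m + 2 := by positivity
  by_cases hpos : 0 < marginalRevenue U (m + 1) ε
  · obtain ⟨hε₁, hε₂⟩ := (marginalRevenue_succ_pos_iff hU m hε.1).1 hpos
    rw [div_lt_iff₀ hm₀] at hε₁
    have hlin : 0 ≤ (m + 2) * ε - (m + 1) := by linarith
    calc marginalRevenue U (m + 1) ε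
        = (1 - ε) * U * (ε ^ m * ((m + 2) * ε - (m + 1))) := marginalRevenue_succ U m ε
      _ ≤ (1 - ε) * U := mul_le_of_le_one_right (mul_nonneg (sub_nonneg.2 hε₂.le) hU.le)
          (mul_le_one₀ (pow_le_one₀ hε.1.le hε.2.le) hlin (by nlinarith))
      _ < C := by nlinarith
  · have : 0 < C := pos_of_mul_pos_left (hU.trans_le hm) hm₀.le
    linarith

def IsInducedPromptNumber (U C : ℝ) (σ : ℝ → ℕ) : Prop :=
  ∀ ε ∈ Set.Ioo (0 : ℝ) 1,
    (C < (1 - ε) * U →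
      IsLeast {k : ℕ | 1 ≤ k ∧
        ((k : ℝ) + 1) * ε ^ k - (k : ℝ) * ε ^ (k - 1) < C / ((1 - ε) * U)}
        (σ ε)) ∧
    ((1 - ε) * U ≤ C → σ ε = 0)

namespace IsInducedPromptNumber

variable {U C : ℝ} {σ : ℝ → ℕ} {ε : ℝ}

lemma pos_iff (hσ : IsInducedPromptNumber U C σ) (hε : ε ∈ Ioo 0 1) :
    0 < σ ε ↔ C < (1 - ε) * U :=
  ⟨fun h ↦ not_le.1 fun h' ↦ h.ne' ((hσ ε hε).2 h'), fun h ↦ ((hσ ε hε).1 h).1.1⟩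

lemma marginalRevenue_lt (hU : 0 < U) (hσ : IsInducedPromptNumber U C σ) (hε : ε ∈ Ioo 0 1)
    (h : 0 < σ ε) : marginalRevenue U (σ ε) ε < C :=
  have hC := (hσ.pos_iff hε).1 h
  (lt_div_iff₀' (mul_pos (sub_pos.2 hε.2) hU)).1 ((hσ ε hε).1 hC).1.2

lemma le_marginalRevenue (hU : 0 < U) (hσ : IsInducedPromptNumber U C σ) (hε : ε ∈ Ioo 0 1)
    {k : ℕ} (hk : 0 < k) (hlt : k < σ ε) : C ≤ marginalRevenue U k ε :=
  have hC := (hσ.pos_iff hε).1 (hk.trans hlt)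
  not_lt.1 fun h ↦ (((hσ ε hε).1 hC).2
    ⟨hk, (lt_div_iff₀' (mul_pos (sub_pos.2 hε.2) hU)).2 h⟩).not_gt hlt

lemma le_succ_of_marginalRevenue_lt (hU : 0 < U) (hσ : IsInducedPromptNumber U C σ)
    (hε : ε ∈ Ioo 0 1) {m : ℕ} (h : marginalRevenue U (m + 1) ε < C) : σ ε ≤ m + 1 :=
  not_lt.1 fun hlt ↦ (hσ.le_marginalRevenue hU hε m.succ_pos hlt).not_gt h

lemma bddAbove_image (hU : 0 < U) (hC : 0 < C) (hσ : IsInducedPromptNumber U C σ) :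
    BddAbove (σ '' Ioo 0 1) := by
  obtain ⟨m, hm⟩ := exists_nat_ge (U / C)
  have hUm : U ≤ C * (m + 2) := by
    rw [div_le_iff₀ hC] at hm
    nlinarith
  exact ⟨m + 1, forall_mem_image.2 fun ε hε ↦
    hσ.le_succ_of_marginalRevenue_lt hU hε (marginalRevenue_succ_lt hU hUm hε)⟩

lemma quasiconcaveOn (hU : 0 < U) (hC : 0 < C) (hσ : IsInducedPromptNumber U C σ) :
    QuasiconcaveOn ℝ (Ioo 0 1) σ := by
  refine fun r ↦ convex_iff_ordConnected.2 ⟨fun x ⟨hx, hrx⟩ z ⟨hz, hrz⟩ y ⟨hxy, hyz⟩ ↦ ?_⟩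
  have hy : y ∈ Ioo (0 : ℝ) 1 := ⟨hx.1.trans_le hxy, hyz.trans_lt hz.2⟩
  refine ⟨hy, not_lt.1 fun hyr ↦ ?_⟩
  have hσy : 0 < σ y := (hσ.pos_iff hy).2 <| ((hσ.pos_iff hz).1 (by omega)).trans_le <|
    mul_le_mul_of_nonneg_right (by linarith) hU.le
  have := (ordConnected_inter_setOf_le_marginalRevenue hU hC hσy.ne').out
    ⟨hx.1, hσ.le_marginalRevenue hU hx hσy (by omega)⟩
    ⟨hz.1, hσ.le_marginalRevenue hU hz hσy (by omega)⟩ ⟨hxy, hyz⟩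
  exact (hσ.marginalRevenue_lt hU hy hσy).not_ge this.2

end IsInducedPromptNumber

/-- STATEMENT 16 (Corollary 1, low-cost case `C ∈ (0, U/8]`): the induced
optimal prompt number `σ ε = min {k ≥ 1 : (k+1)·ε^k - k·ε^(k-1) < C/((1-ε)U)}`
(with `σ ε = 0` when `C ≥ (1-ε)U`) is unimodal on `(0,1)`: nondecreasing up to
some `ε₀ ∈ (0,1)` and nonincreasing afterwards. -/
theorem induced_prompt_number_unimodal_low_cost
    (U C : ℝ) (hU : 0 < U) (hC : C ∈ Set.Ioc (0 : ℝ) (U / 8))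
    (σ : ℝ → ℕ)
    (hσ : ∀ ε ∈ Set.Ioo (0 : ℝ) 1,
      (C < (1 - ε) * U →
        IsLeast {k : ℕ | 1 ≤ k ∧
          ((k : ℝ) + 1) * ε ^ k - (k : ℝ) * ε ^ (k - 1) < C / ((1 - ε) * U)}
          (σ ε)) ∧
      ((1 - ε) * U ≤ C → σ ε = 0)) :
    ∃ ε₀ ∈ Set.Ioo (0 : ℝ) 1,
      (∀ ε₁ ∈ Set.Ioo (0 : ℝ) 1, ∀ ε₂ ∈ Set.Ioo (0 : ℝ) 1,
        ε₁ ≤ ε₂ → ε₂ ≤ ε₀ → σ ε₁ ≤ σ ε₂) ∧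
      (∀ ε₁ ∈ Set.Ioo (0 : ℝ) 1, ∀ ε₂ ∈ Set.Ioo (0 : ℝ) 1,
        ε₀ ≤ ε₁ → ε₁ ≤ ε₂ → σ ε₂ ≤ σ ε₁) := by
  have hσ' : IsInducedPromptNumber U C σ := hσ
  obtain ⟨ε₀, hε₀, hmono, hanti⟩ := (hσ'.quasiconcaveOn hU hC.1).exists_monotoneOn_antitoneOn
    ⟨1 / 2, by norm_num, by norm_num⟩ (hσ'.bddAbove_image hU hC.1)
  exact ⟨ε₀, hε₀, fun ε₁ h₁ ε₂ h₂ h₁₂ h₂₀ ↦ hmono ⟨h₁, h₁₂.trans h₂₀⟩ ⟨h₂, h₂₀⟩ h₁₂,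
    fun ε₁ h₁ ε₂ h₂ h₀₁ h₁₂ ↦ hanti ⟨h₁, h₀₁⟩ ⟨h₂, h₀₁.trans h₁₂⟩ h₁₂⟩
end

section
/- Let U > 0. For ε ∈ (0,1) define σ(ε) = min{k ∈ ℕ, k ≥ 1 : (k+1)·ε^k − k·ε^{k−1} < C/((1 − ε)·U)} when C < (1 − ε)·U, and σ(ε) = 0 when C ≥ (1 − ε)·U. (i) If C ∈ (U/8, U), then σ is nonincreasing on (0,1). (ii) If C ≥ U, then σ(ε) = 0 for all ε ∈ (0,1). -/
/-!
Since `(2ε - 1)(1 - ε) ≤ 1/8` for every real `ε` (with equality at `ε = 3/4`), a cost `C > U/8`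
makes `k = 1` satisfy the defining inequality of `σ ε` as soon as `C < (1 - ε)U`. Hence `σ ε = 1`
for `ε < 1 - C/U` and `σ ε = 0` otherwise, which is nonincreasing in `ε`. If `C ≥ U`, the second
case holds for every `ε ∈ (0,1)`.
-/

lemma two_mul_sub_one_mul_one_sub_le (ε : ℝ) : (2 * ε - 1) * (1 - ε) ≤ 1 / 8 := by
  nlinarith [sq_nonneg (ε - 3 / 4)]

lemma two_mul_sub_one_lt_div_of_div_eight_lt {U C ε : ℝ} (hU : 0 < U) (hC : U / 8 < C)
    (hCε : C < (1 - ε) * U) : 2 * ε - 1 < C / ((1 - ε) * U) := by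
  rw [lt_div_iff₀ (by linarith)]
  calc (2 * ε - 1) * ((1 - ε) * U) = (2 * ε - 1) * (1 - ε) * U := by ring
    _ ≤ 1 / 8 * U := mul_le_mul_of_nonneg_right (two_mul_sub_one_mul_one_sub_le ε) hU.le
    _ < C := by linarith

/-- Corollary 1, high-cost cases: with
`σ ε = min {k ≥ 1 : (k+1)·ε^k - k·ε^(k-1) < C/((1-ε)U)}` when `C < (1-ε)U`,
and `σ ε = 0` when `C ≥ (1-ε)U`: (i) if `C ∈ (U/8, U)` then `σ` is
nonincreasing on `(0,1)`; (ii) if `C ≥ U` then `σ ε = 0` for all `ε ∈ (0,1)`. -/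
theorem induced_prompt_number_high_cost
    (U C : ℝ) (hU : 0 < U)
    (σ : ℝ → ℕ)
    (hσ : ∀ ε ∈ Set.Ioo (0 : ℝ) 1,
      (C < (1 - ε) * U →
        IsLeast {k : ℕ | 1 ≤ k ∧
          ((k : ℝ) + 1) * ε ^ k - (k : ℝ) * ε ^ (k - 1) < C / ((1 - ε) * U)}
          (σ ε)) ∧
      ((1 - ε) * U ≤ C → σ ε = 0)) :
    (C ∈ Set.Ioo (U / 8) U →
      ∀ ε₁ ∈ Set.Ioo (0 : ℝ) 1, ∀ ε₂ ∈ Set.Ioo (0 : ℝ) 1,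
        ε₁ ≤ ε₂ → σ ε₂ ≤ σ ε₁) ∧
    (U ≤ C → ∀ ε ∈ Set.Ioo (0 : ℝ) 1, σ ε = 0) := by
  have hσ_eq_one : ∀ ε ∈ Set.Ioo (0 : ℝ) 1, U / 8 < C → C < (1 - ε) * U → σ ε = 1 := by
    intro ε hε hC hCε
    refine ((hσ ε hε).1 hCε).unique ⟨⟨le_rfl, ?_⟩, fun k hk => hk.1⟩
    simpa [one_add_one_eq_two] using two_mul_sub_one_lt_div_of_div_eight_lt hU hC hCε
  refine ⟨fun ⟨hC, _⟩ ε₁ hε₁ ε₂ hε₂ h₁₂ => ?_, fun hUC ε hε => (hσ ε hε).2 ?_⟩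
  · by_cases h₂ : C < (1 - ε₂) * U
    · have h₁ : C < (1 - ε₁) * U := h₂.trans_le (by gcongr)
      rw [hσ_eq_one ε₁ hε₁ hC h₁, hσ_eq_one ε₂ hε₂ hC h₂]
    · rw [(hσ ε₂ hε₂).2 (not_lt.1 h₂)]
      exact Nat.zero_le _
  · nlinarith [hε.1]
end

section
/- Let U > 0 and C ≥ 0. For p > 0 and ε ∈ (0,1) let n*(p, ε) = ⌊log_ε( ε·p / ((1−ε)·U) )⌋ if p ≤ (1 − ε)·U and n*(p, ε) = 0 otherwise, and define the platform's optimal payoff Π(ε) = sup_{p > 0} (p − C)·n*(p, ε). Then Π(ε) is finite for every ε ∈ (0,1), and Π is nonincreasing on (0,1). -/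
noncomputable def phiP (m : ℕ) (e : ℝ) : ℝ := (m : ℝ) * ((1 - e) * e ^ (m - 1))

-- g k x = (1-x) x^(k+1), as polynomial form
lemma gderiv (k : ℕ) (x : ℝ) :
    deriv (fun x : ℝ => x ^ (k+1) - x ^ (k+2)) x
      = (k+1) * x ^ k - (k+2) * x ^ (k+1) := by
  rw [deriv_fun_sub (differentiable_pow _).differentiableAt (differentiable_pow _).differentiableAt]
  simp [deriv_pow]

lemma gmono (k : ℕ) : MonotoneOn (fun x : ℝ => x ^ (k+1) - x ^ (k+2))
    (Set.Icc 0 (((k:ℝ)+1)/((k:ℝ)+2))) := by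
  have hc : (0:ℝ) ≤ ((k:ℝ)+1)/((k:ℝ)+2) := by positivity
  apply monotoneOn_of_deriv_nonneg (convex_Icc _ _)
  · exact ((differentiable_pow (𝕜 := ℝ) _).sub (differentiable_pow (𝕜 := ℝ) _)).continuous.continuousOn
  · exact ((differentiable_pow (𝕜 := ℝ) _).sub (differentiable_pow (𝕜 := ℝ) _)).differentiableOn
  · intro x hx
    rw [interior_Icc] at hx
    rw [gderiv]
    have hx0 : 0 ≤ x := le_of_lt hx.1
    have hx2 : ((k:ℝ)+2) * x ≤ (k:ℝ)+1 := by
      have := hx.2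
      rw [lt_div_iff₀ (by positivity : (0:ℝ) < (k:ℝ)+2)] at this
      nlinarith
    have : ((k:ℝ)+2) * x ^ (k+1) ≤ ((k:ℝ)+1) * x ^ k := by
      calc ((k:ℝ)+2) * x ^ (k+1) = (((k:ℝ)+2) * x) * x ^ k := by ring
        _ ≤ ((k:ℝ)+1) * x ^ k := by
            apply mul_le_mul_of_nonneg_right hx2 (by positivity)
    linarith

lemma ganti (k : ℕ) : AntitoneOn (fun x : ℝ => x ^ (k+1) - x ^ (k+2))
    (Set.Icc (((k:ℝ)+1)/((k:ℝ)+2)) 1) := by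
  have hc : (0:ℝ) ≤ ((k:ℝ)+1)/((k:ℝ)+2) := by positivity
  apply antitoneOn_of_deriv_nonpos (convex_Icc _ _)
  · exact ((differentiable_pow (𝕜 := ℝ) _).sub (differentiable_pow (𝕜 := ℝ) _)).continuous.continuousOn
  · exact ((differentiable_pow (𝕜 := ℝ) _).sub (differentiable_pow (𝕜 := ℝ) _)).differentiableOn
  · intro x hx
    rw [interior_Icc] at hx
    rw [gderiv]
    have hx0 : 0 ≤ x := le_trans hc (le_of_lt hx.1)
    have hx2 : (k:ℝ)+1 ≤ ((k:ℝ)+2) * x := by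
      have := hx.1
      rw [div_lt_iff₀ (by positivity : (0:ℝ) < (k:ℝ)+2)] at this
      nlinarith
    have : ((k:ℝ)+1) * x ^ k ≤ ((k:ℝ)+2) * x ^ (k+1) := by
      calc ((k:ℝ)+1) * x ^ k ≤ (((k:ℝ)+2) * x) * x ^ k := by
            apply mul_le_mul_of_nonneg_right hx2 (by positivity)
        _ = ((k:ℝ)+2) * x ^ (k+1) := by ring
    linarith

lemma phiP_g (k : ℕ) (x : ℝ) : phiP (k+2) x = ((k:ℝ)+2) * (x ^ (k+1) - x ^ (k+2)) := by
  simp only [phiP]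
  push_cast
  ring_nf

lemma phiL {m : ℕ} (hm : 1 ≤ m) {a b : ℝ} (ha : ((m:ℝ)-1)/m ≤ a) (hab : a ≤ b)
    (hb : b ≤ 1) : phiP m b ≤ phiP m a := by
  match m, hm with
  | 1, _ => simp [phiP]; linarith
  | (k+2), _ =>
    rw [phiP_g, phiP_g]
    have hcast : ((k:ℝ)+1)/((k:ℝ)+2) ≤ a := by
      have : ((k+2:ℕ):ℝ) - 1 = (k:ℝ)+1 := by push_cast; ring
      rw [this] at ha
      convert ha using 2 <;> push_cast <;> ring
    apply mul_le_mul_of_nonneg_left _ (by positivity)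
    exact ganti k ⟨hcast, le_trans hab hb⟩ ⟨le_trans hcast hab, hb⟩ hab

lemma phiPeak {m : ℕ} (hm : 1 ≤ m) {e : ℝ} (h0 : 0 ≤ e) (h1 : e ≤ 1) :
    phiP m e ≤ phiP m (((m:ℝ)-1)/m) := by
  match m, hm with
  | 1, _ => norm_num [phiP]; linarith
  | (k+2), _ =>
    have hcast : (((k+2:ℕ):ℝ)-1)/((k+2:ℕ):ℝ) = ((k:ℝ)+1)/((k:ℝ)+2) := by push_cast; ring_nf
    rw [hcast, phiP_g, phiP_g]
    have hc0 : (0:ℝ) ≤ ((k:ℝ)+1)/((k:ℝ)+2) := by positivity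
    have hc1 : ((k:ℝ)+1)/((k:ℝ)+2) ≤ 1 := by
      rw [div_le_one (by positivity)]; linarith
    apply mul_le_mul_of_nonneg_left _ (by positivity)
    rcases le_total e (((k:ℝ)+1)/((k:ℝ)+2)) with h | h
    · exact gmono k ⟨h0, h⟩ ⟨hc0, le_refl _⟩ h
    · exact ganti k ⟨le_refl _, hc1⟩ ⟨h, h1⟩ h

lemma phiStep (j : ℕ) (hj : 1 ≤ j) : phiP (j+1) ((j:ℝ)/((j:ℝ)+1)) = phiP j ((j:ℝ)/((j:ℝ)+1)) := by
  match j, hj with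
  | (i+1), _ =>
    simp only [phiP]
    push_cast
    have h1 : ((i:ℝ)+1)+1 ≠ 0 := by positivity
    simp only [pow_succ]
    field_simp

noncomputable def BP (j : ℕ) : ℝ := phiP j (((j:ℝ)-1)/(j:ℝ))

lemma BP_anti {m n : ℕ} (hm : 1 ≤ m) (hmn : m ≤ n) : BP n ≤ BP m := by
  induction n, hmn using Nat.le_induction with
  | base => exact le_refl _
  | succ j hj ih =>
    refine le_trans ?_ ih
    have hj1 : 1 ≤ j := le_trans hm hj
    have hcast : (((j+1:ℕ):ℝ)-1)/((j+1:ℕ):ℝ) = (j:ℝ)/((j:ℝ)+1) := by push_cast; ring_nf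
    have hj0 : (0:ℝ) < j := by exact_mod_cast hj1
    unfold BP
    rw [hcast, phiStep j hj1]
    apply phiL hj1 (le_refl _) _ (by rw [div_le_one (by positivity)]; linarith)
    rw [div_le_div_iff₀ hj0 (by positivity)]
    nlinarith

lemma keyLemma {e1 e2 : ℝ} (h1 : e1 ∈ Set.Ioo (0:ℝ) 1) (h2 : e2 ∈ Set.Ioo (0:ℝ) 1)
    (h12 : e1 ≤ e2) {n : ℕ} (hn : 1 ≤ n) :
    ∃ m, 1 ≤ m ∧ m ≤ n ∧ phiP n e2 ≤ phiP m e1 := by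
  by_cases hA : ((n:ℝ)-1)/(n:ℝ) ≤ e1
  · exact ⟨n, hn, le_refl n, phiL hn hA h12 (le_of_lt h2.2)⟩
  · push_neg at hA
    -- n ≥ 2
    have hn2 : 2 ≤ n := by
      by_contra h
      interval_cases n
      · norm_num at hA; linarith [h1.1]
    obtain ⟨t, rfl⟩ : ∃ t, n = t + 2 := ⟨n - 2, by omega⟩
    have hP : ∃ k : ℕ, e1 ≤ ((k:ℝ)+1)/((k:ℝ)+2) := by
      refine ⟨t, le_of_lt ?_⟩
      convert hA using 2 <;> push_cast <;> ring
    classical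
    set f := Nat.find hP with hf
    set m := f + 1 with hmdef
    have hPm : e1 ≤ ((m:ℝ))/((m:ℝ)+1) := by
      have := Nat.find_spec hP
      rw [← hf] at this
      convert this using 2 <;> rw [hmdef] <;> push_cast <;> ring
    have hmin : ((m:ℝ)-1)/(m:ℝ) ≤ e1 := by
      rcases Nat.eq_zero_or_pos f with h0 | h0
      · rw [hmdef, h0]; norm_num; exact le_of_lt h1.1
      · have hnot := Nat.find_min hP (show f - 1 < f by omega)
        push_neg at hnot
        have hc : ((f:ℝ)-1+1)/((f:ℝ)-1+2) = ((m:ℝ)-1)/(m:ℝ) := by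
          rw [hmdef]; push_cast; ring_nf
        have : (((f-1:ℕ)):ℝ) = (f:ℝ) - 1 := by
          have : (1:ℕ) ≤ f := h0
          push_cast [this]; ring
        rw [this] at hnot
        rw [← hc]; exact le_of_lt hnot
    have hmn : m ≤ t + 1 := by
      rw [hmdef]
      have : f ≤ t := Nat.find_le (by
        refine le_of_lt ?_
        convert hA using 2 <;> push_cast <;> ring)
      omega
    refine ⟨m, by omega, by omega, ?_⟩
    have step1 : phiP (t+2) e2 ≤ BP (t+2) := by
      unfold BP
      exact phiPeak (by omega) (le_of_lt h2.1) (le_of_lt h2.2)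
    have step2 : BP (t+2) ≤ BP (m+1) := BP_anti (by omega) (by omega)
    have step3 : BP (m+1) ≤ phiP m e1 := by
      unfold BP
      have hcast : (((m+1:ℕ):ℝ)-1)/((m+1:ℕ):ℝ) = (m:ℝ)/((m:ℝ)+1) := by push_cast; ring_nf
      rw [hcast, phiStep m (by omega)]
      exact phiL (by omega) hmin hPm (by
        rw [div_le_one (by positivity)]; linarith)
    linarith

lemma phiP_le_one {n : ℕ} {e : ℝ} (h0 : 0 ≤ e) (h1 : e ≤ 1) : phiP n e ≤ 1 := by
  have hsum : (n : ℝ) * e ^ (n-1) ≤ ∑ i ∈ Finset.range n, e ^ i := by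
    have := Finset.card_nsmul_le_sum (Finset.range n) (fun i => e ^ i) (e ^ (n-1))
      (fun i hi => pow_le_pow_of_le_one h0 h1 (by
        have := Finset.mem_range.mp hi; omega))
    simpa [nsmul_eq_mul] using this
  have hgeom : (1 - e) * ∑ i ∈ Finset.range n, e ^ i = 1 - e ^ n := by
    have := geom_sum_mul e n
    linarith [this]
  have hen : 0 ≤ e ^ n := pow_nonneg h0 n
  have h1e : 0 ≤ 1 - e := by linarith
  calc phiP n e = (1 - e) * ((n:ℝ) * e ^ (n-1)) := by unfold phiP; ring
    _ ≤ (1 - e) * ∑ i ∈ Finset.range n, e ^ i := mul_le_mul_of_nonneg_left hsum h1e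
    _ = 1 - e ^ n := hgeom
    _ ≤ 1 := by linarith

/-- Proposition 3 of the paper: with `n*(p,ε)` the optimal
prompt number, the platform's optimal payoff
`Π ε = sup_{p > 0} (p - C)·n*(p,ε)` is finite (the set of attainable payoffs
is bounded above) for every `ε ∈ (0,1)`, and `Π` is nonincreasing on `(0,1)`. -/
theorem platform_optimal_payoff_antitone
    (U C : ℝ) (hU : 0 < U) (hC : 0 ≤ C)
    (nstar : ℝ → ℝ → ℕ)
    (hn : ∀ ε ∈ Set.Ioo (0 : ℝ) 1, ∀ p > (0 : ℝ),
      nstar p ε = if p ≤ (1 - ε) * U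
        then ⌊Real.logb ε (ε * p / ((1 - ε) * U))⌋₊ else 0)
    (Pl : ℝ → ℝ)
    (hPl : ∀ ε ∈ Set.Ioo (0 : ℝ) 1,
      Pl ε = sSup {x : ℝ | ∃ p > (0 : ℝ), x = (p - C) * (nstar p ε : ℝ)}) :
    (∀ ε ∈ Set.Ioo (0 : ℝ) 1,
      BddAbove {x : ℝ | ∃ p > (0 : ℝ), x = (p - C) * (nstar p ε : ℝ)}) ∧
    (∀ ε₁ ∈ Set.Ioo (0 : ℝ) 1, ∀ ε₂ ∈ Set.Ioo (0 : ℝ) 1,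
      ε₁ ≤ ε₂ → Pl ε₂ ≤ Pl ε₁) := by
  -- price bound : if nstar p ε = j+1 then p ≤ (1-ε)*U*ε^j
  have price_bound : ∀ ε ∈ Set.Ioo (0:ℝ) 1, ∀ p > (0:ℝ), ∀ j : ℕ,
      nstar p ε = j + 1 → p ≤ (1 - ε) * U * ε ^ j := by
    intro ε hε p hp j hj
    have hε0 := hε.1
    have hε1 := hε.2
    have hKpos : 0 < (1 - ε) * U := by
      have : 0 < 1 - ε := by linarith
      positivity
    have heq := hn ε hε p hp
    rw [hj] at heq
    by_cases hK : p ≤ (1 - ε) * U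
    · rw [if_pos hK] at heq
      set y := ε * p / ((1 - ε) * U) with hy
      have hy0 : 0 < y := by positivity
      have hfl : ((j + 1 : ℕ) : ℝ) ≤ Real.logb ε y := by
        exact (Nat.le_floor_iff' (Nat.succ_ne_zero j)).mp (le_of_eq heq)
      have hlogε : Real.log ε < 0 := Real.log_neg hε0 hε1
      rw [Real.logb, le_div_iff_of_neg hlogε] at hfl
      have hpow : Real.log y ≤ Real.log (ε ^ (j+1)) := by
        rw [Real.log_pow]; push_cast at hfl ⊢; linarith
      have hyle : y ≤ ε ^ (j+1) :=
        (Real.log_le_log_iff hy0 (by positivity)).mp hpow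
      rw [hy, div_le_iff₀ hKpos] at hyle
      have : ε * p ≤ ε * ((1 - ε) * U * ε ^ j) := by
        calc ε * p ≤ ε ^ (j+1) * ((1 - ε) * U) := hyle
          _ = ε * ((1 - ε) * U * ε ^ j) := by rw [pow_succ]; ring
      exact le_of_mul_le_mul_left this hε0
    · rw [if_neg hK] at heq
      exact absurd heq (by omega)
  -- every element of the payoff set is ≤ U
  have payoff_le : ∀ ε ∈ Set.Ioo (0:ℝ) 1,
      ∀ x ∈ {x : ℝ | ∃ p > (0 : ℝ), x = (p - C) * (nstar p ε : ℝ)}, x ≤ U := by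
    intro ε hε x hx
    obtain ⟨p, hp, rfl⟩ := hx
    rcases Nat.eq_zero_or_pos (nstar p ε) with h0 | h0
    · rw [h0]; simpa using le_of_lt hU
    · obtain ⟨j, hj⟩ : ∃ j, nstar p ε = j + 1 := ⟨nstar p ε - 1, by omega⟩
      have hpb := price_bound ε hε p hp j hj
      rw [hj]
      have hn1 : (0:ℝ) ≤ ((j+1 : ℕ) : ℝ) := by positivity
      have h1 : (p - C) * ((j+1 : ℕ) : ℝ) ≤ p * ((j+1 : ℕ) : ℝ) := by
        apply mul_le_mul_of_nonneg_right _ hn1; linarith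
      have h2 : p * ((j+1 : ℕ) : ℝ) ≤ ((1 - ε) * U * ε ^ j) * ((j+1 : ℕ) : ℝ) :=
        mul_le_mul_of_nonneg_right hpb hn1
      have h3 : ((1 - ε) * U * ε ^ j) * ((j+1 : ℕ) : ℝ) = U * phiP (j+1) ε := by
        unfold phiP; push_cast; ring
      have h4 : U * phiP (j+1) ε ≤ U * 1 :=
        mul_le_mul_of_nonneg_left (phiP_le_one (le_of_lt hε.1) (le_of_lt hε.2)) (le_of_lt hU)
      linarith
  have hbdd : ∀ ε ∈ Set.Ioo (0:ℝ) 1,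
      BddAbove {x : ℝ | ∃ p > (0 : ℝ), x = (p - C) * (nstar p ε : ℝ)} :=
    fun ε hε => ⟨U, fun x hx => payoff_le ε hε x hx⟩
  -- zero is attainable
  have zero_mem : ∀ ε ∈ Set.Ioo (0:ℝ) 1,
      (0:ℝ) ∈ {x : ℝ | ∃ p > (0 : ℝ), x = (p - C) * (nstar p ε : ℝ)} := by
    intro ε hε
    have hK : 0 < (1 - ε) * U := by
      have : 0 < 1 - ε := by linarith [hε.2]
      positivity
    refine ⟨(1 - ε) * U + 1, by linarith, ?_⟩
    rw [hn ε hε _ (by linarith), if_neg (by linarith)]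
    simp
  refine ⟨hbdd, ?_⟩
  intro ε₁ hε₁ ε₂ hε₂ h12
  rw [hPl ε₁ hε₁, hPl ε₂ hε₂]
  have hbdd₁ := hbdd ε₁ hε₁
  have hsup0 : 0 ≤ sSup {x : ℝ | ∃ p > (0 : ℝ), x = (p - C) * (nstar p ε₁ : ℝ)} :=
    le_csSup hbdd₁ (zero_mem ε₁ hε₁)
  apply csSup_le ⟨0, zero_mem ε₂ hε₂⟩
  intro x hx
  obtain ⟨p, hp, rfl⟩ := hx
  by_cases hx0 : (p - C) * (nstar p ε₂ : ℝ) ≤ 0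
  · linarith
  · push_neg at hx0
    have hns : nstar p ε₂ ≠ 0 := by
      intro h; rw [h] at hx0; simp at hx0
    obtain ⟨j, hj⟩ : ∃ j, nstar p ε₂ = j + 1 := ⟨nstar p ε₂ - 1, by omega⟩
    have hpb := price_bound ε₂ hε₂ p hp j hj
    obtain ⟨m, hm1, hmn, hkey⟩ := keyLemma hε₁ hε₂ h12 (n := j+1) (by omega)
    obtain ⟨i, rfl⟩ : ∃ i, m = i + 1 := ⟨m - 1, by omega⟩
    have hε₁0 := hε₁.1
    have hε₁1 := hε₁.2
    have hK₁ : 0 < (1 - ε₁) * U := by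
      have : 0 < 1 - ε₁ := by linarith
      positivity
    set q : ℝ := (1 - ε₁) * U * ε₁ ^ i with hq
    have hq0 : 0 < q := by
      have : 0 < 1 - ε₁ := by linarith
      positivity
    have hqK : q ≤ (1 - ε₁) * U := by
      calc q = (1 - ε₁) * U * ε₁ ^ i := hq
        _ ≤ (1 - ε₁) * U * 1 := by
            apply mul_le_mul_of_nonneg_left _ (le_of_lt hK₁)
            exact pow_le_one₀ (le_of_lt hε₁0) (le_of_lt hε₁1)
        _ = (1 - ε₁) * U := by ring
    have hnq : nstar q ε₁ = i + 1 := by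
      rw [hn ε₁ hε₁ q hq0, if_pos hqK]
      have harg : ε₁ * q / ((1 - ε₁) * U) = ε₁ ^ (i+1) := by
        rw [hq]; field_simp; ring
      have hlogb : Real.logb ε₁ (ε₁ ^ (i+1)) = ((i+1 : ℕ) : ℝ) := by
        have hlogne : Real.log ε₁ ≠ 0 := ne_of_lt (Real.log_neg hε₁0 hε₁1)
        rw [Real.logb, Real.log_pow]
        field_simp
      rw [harg, hlogb, Nat.floor_natCast]
    have hmem : (q - C) * ((i+1 : ℕ) : ℝ) ∈
        {x : ℝ | ∃ p > (0 : ℝ), x = (p - C) * (nstar p ε₁ : ℝ)} := by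
      exact ⟨q, hq0, by rw [hnq]⟩
    have hstep : (p - C) * ((nstar p ε₂ : ℕ) : ℝ) ≤ (q - C) * ((i+1 : ℕ) : ℝ) := by
      rw [hj]
      have hb1 : (p - C) * ((j+1 : ℕ) : ℝ) ≤ ((1 - ε₂) * U * ε₂ ^ j - C) * ((j+1 : ℕ) : ℝ) := by
        apply mul_le_mul_of_nonneg_right _ (by positivity)
        linarith
      have hb2 : ((1 - ε₂) * U * ε₂ ^ j - C) * ((j+1 : ℕ) : ℝ)
          = U * phiP (j+1) ε₂ - ((j+1 : ℕ) : ℝ) * C := by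
        unfold phiP; push_cast; ring
      have hb3 : (q - C) * ((i+1 : ℕ) : ℝ)
          = U * phiP (i+1) ε₁ - ((i+1 : ℕ) : ℝ) * C := by
        rw [hq]; unfold phiP; push_cast; ring
      have hphi : U * phiP (j+1) ε₂ ≤ U * phiP (i+1) ε₁ :=
        mul_le_mul_of_nonneg_left hkey (le_of_lt hU)
      have hCn : ((i+1 : ℕ) : ℝ) * C ≤ ((j+1 : ℕ) : ℝ) * C := by
        apply mul_le_mul_of_nonneg_right _ hC
        exact_mod_cast hmn
      linarith
    exact le_trans hstep (le_csSup hbdd₁ hmem)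
end
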